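/- arXiv:2001.05866 — 5 statements merged into one kernel-verified Lean document; each statement's English description precedes it below -/
import Mathlib

section
/- For any two vectors a, b in ℝ², the quadruple (B₀, B₁, B₂, B₃) with B₀ = -|a×b|, B₁ = |a×b| + ‖a‖², B₂ = |a×b| + ‖b‖², B₃ = |a×b| + ‖a+b‖² satisfies the Descartes formula 2(B₀² + B₁² + B₂² + B₃²) = (B₀ + B₁ + B₂ + B₃)². -/
theorem stmt_0 (a₁ a₂ b₁ b₂ : ℝ)
    (B₀ B₁ B₂ B₃ : ℝ)
    (hB₀ : B₀ = -|a₁ * b₂ - a₂ * b₁|)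
    (hB₁ : B₁ = |a₁ * b₂ - a₂ * b₁| + (a₁ ^ 2 + a₂ ^ 2))
    (hB₂ : B₂ = |a₁ * b₂ - a₂ * b₁| + (b₁ ^ 2 + b₂ ^ 2))
    (hB₃ : B₃ = |a₁ * b₂ - a₂ * b₁| + ((a₁ + b₁) ^ 2 + (a₂ + b₂) ^ 2)) :
    2 * (B₀ ^ 2 + B₁ ^ 2 + B₂ ^ 2 + B₃ ^ 2) = (B₀ + B₁ + B₂ + B₃) ^ 2 := by
  have h : |a₁ * b₂ - a₂ * b₁| ^ 2 = (a₁ * b₂ - a₂ * b₁) ^ 2 := sq_abs _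
  subst hB₀ hB₁ hB₂ hB₃
  nlinarith [h, sq_abs (a₁ * b₂ - a₂ * b₁)]
end

section
/- For any two vectors a, b in ℝ², the quadruple (B₀, B₁, B₂, B₄) with B₀ = -|a×b|, B₁ = |a×b| + ‖a‖², B₂ = |a×b| + ‖b‖², B₄ = |a×b| + ‖a-b‖² satisfies the Descartes formula 2(B₀² + B₁² + B₂² + B₄²) = (B₀ + B₁ + B₂ + B₄)². -/
theorem stmt_1 (a₁ a₂ b₁ b₂ : ℝ)
    (B₀ B₁ B₂ B₄ : ℝ)
    (hB₀ : B₀ = -|a₁ * b₂ - a₂ * b₁|)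
    (hB₁ : B₁ = |a₁ * b₂ - a₂ * b₁| + (a₁ ^ 2 + a₂ ^ 2))
    (hB₂ : B₂ = |a₁ * b₂ - a₂ * b₁| + (b₁ ^ 2 + b₂ ^ 2))
    (hB₄ : B₄ = |a₁ * b₂ - a₂ * b₁| + ((a₁ - b₁) ^ 2 + (a₂ - b₂) ^ 2)) :
    2 * (B₀ ^ 2 + B₁ ^ 2 + B₂ ^ 2 + B₄ ^ 2) = (B₀ + B₁ + B₂ + B₄) ^ 2 := by
  have h : |a₁ * b₂ - a₂ * b₁| ^ 2 = (a₁ * b₂ - a₂ * b₁) ^ 2 := sq_abs _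
  subst hB₀ hB₁ hB₂ hB₄
  nlinarith [h]
end

section
/- If integers B, μ, k, n with k > 0 satisfy B² + μ² = k·n, then the quintuple of curvatures B₀ = -B, B₁ = B+k, B₂ = B+n, B₃ = B+k+n-2μ satisfies the Descartes formula 2(B₀² + B₁² + B₂² + B₃²) = (B₀+B₁+B₂+B₃)². -/
theorem stmt_3 (B μ k n : ℤ) (hk : 0 < k) (h : B ^ 2 + μ ^ 2 = k * n) :
    2 * ((-B) ^ 2 + (B + k) ^ 2 + (B + n) ^ 2 + (B + k + n - 2 * μ) ^ 2)
      = (-B + (B + k) + (B + n) + (B + k + n - 2 * μ)) ^ 2 := by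
  nlinarith [h]
end

section
/- For any two integer vectors a, b in ℤ², the four integers B₀ = -|a×b|, B₁ = |a×b| + ‖a‖², B₂ = |a×b| + ‖b‖², B₃ = |a×b| + ‖a+b‖² are integers satisfying the Descartes formula, with B₁, B₂, B₃ all nonnegative. -/
theorem stmt_7 (a₁ a₂ b₁ b₂ : ℤ)
    (B₀ B₁ B₂ B₃ : ℤ)
    (hB₀ : B₀ = -|a₁ * b₂ - a₂ * b₁|)
    (hB₁ : B₁ = |a₁ * b₂ - a₂ * b₁| + (a₁ ^ 2 + a₂ ^ 2))
    (hB₂ : B₂ = |a₁ * b₂ - a₂ * b₁| + (b₁ ^ 2 + b₂ ^ 2))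
    (hB₃ : B₃ = |a₁ * b₂ - a₂ * b₁| + ((a₁ + b₁) ^ 2 + (a₂ + b₂) ^ 2)) :
    2 * (B₀ ^ 2 + B₁ ^ 2 + B₂ ^ 2 + B₃ ^ 2) = (B₀ + B₁ + B₂ + B₃) ^ 2 ∧
      0 ≤ B₁ ∧ 0 ≤ B₂ ∧ 0 ≤ B₃ := by
  have h := abs_nonneg (a₁ * b₂ - a₂ * b₁)
  have hsq : |a₁ * b₂ - a₂ * b₁| ^ 2 = (a₁ * b₂ - a₂ * b₁) ^ 2 := sq_abs _
  refine ⟨?_, ?_, ?_, ?_⟩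
  · subst hB₀ hB₁ hB₂ hB₃; nlinarith [hsq]
  · subst hB₁; positivity
  · subst hB₂; positivity
  · subst hB₃; positivity
end

section
/- Suppose integers B ≥ 0, μ, k, n satisfy B² + μ² = kn with 2μ ≤ k ≤ n and 0 ≤ μ. Then each of the five integers -B, B+k, B+n, B+k+n-2μ, B+k+n+2μ has absolute value at most B+k+n+2μ, and the quadruples (-B, B+k, B+n, B+k+n-2μ) and (-B, B+k, B+n, B+k+n+2μ) both satisfy the Descartes formula, and their fourth entries sum to 2(-B + (B+k) + (B+n)). -/
theorem stmt_18 (B μ k n : ℤ) (hB : 0 ≤ B) (h : B ^ 2 + μ ^ 2 = k * n)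
    (hμk : 2 * μ ≤ k) (hkn : k ≤ n) (hμ : 0 ≤ μ) :
    (|(-B)| ≤ B + k + n + 2 * μ ∧ |B + k| ≤ B + k + n + 2 * μ ∧
     |B + n| ≤ B + k + n + 2 * μ ∧ |B + k + n - 2 * μ| ≤ B + k + n + 2 * μ ∧
     |B + k + n + 2 * μ| ≤ B + k + n + 2 * μ) ∧
    2 * ((-B) ^ 2 + (B + k) ^ 2 + (B + n) ^ 2 + (B + k + n - 2 * μ) ^ 2)
      = (-B + (B + k) + (B + n) + (B + k + n - 2 * μ)) ^ 2 ∧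
    2 * ((-B) ^ 2 + (B + k) ^ 2 + (B + n) ^ 2 + (B + k + n + 2 * μ) ^ 2)
      = (-B + (B + k) + (B + n) + (B + k + n + 2 * μ)) ^ 2 ∧
    (B + k + n - 2 * μ) + (B + k + n + 2 * μ) = 2 * (-B + (B + k) + (B + n)) := by
  have hk : 0 ≤ k := le_trans (by linarith) hμk
  have hn : 0 ≤ n := le_trans hk hkn
  refine ⟨⟨?_, ?_, ?_, ?_, ?_⟩, by linear_combination 4 * h, by linear_combination 4 * h, by ring⟩ <;>
    rw [abs_le] <;> constructor <;> linarith
end
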